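/- arXiv:1304.4142 — 2 statements merged into one kernel-verified Lean document; each statement's English description precedes it below -/
import Mathlib

section
/- Let H, K be Hilbert spaces and U ∈ B(H ⊗ K) a unitary. Define α : B(K) → B(H ⊗ K) by α(z) = U (1 ⊗ z) U*. Then α is an injective unital *-homomorphism, and an operator z ∈ B(K) satisfies α(z) = 1 ⊗ z if and only if z commutes with every operator of the form (f ⊗ ι)(U) for f a bounded normal functional on B(H), where (f ⊗ ι)(U) denotes the slice of U by f. -/
open scoped InnerProductSpace

/-- `α(z) = U (1 ⊗ z) U*` is an injective unital `*`-homomorphism on `B(K)`, and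
`α(z) = 1 ⊗ z` iff `z` commutes with all slices `(f ⊗ ι)(U)` of `U` by normal
functionals `f` on `B(H)` (modelled by functionals induced by finite families of
vectors, which span a weak*-dense subspace of the normal functionals). -/
theorem conjugation_action_and_fixed_points
    {H K E : Type*}
    [NormedAddCommGroup H] [InnerProductSpace ℂ H] [CompleteSpace H] [Nontrivial H]
    [NormedAddCommGroup K] [InnerProductSpace ℂ K] [CompleteSpace K]
    [NormedAddCommGroup E] [InnerProductSpace ℂ E] [CompleteSpace E]
    (tmul : H →ₗ[ℂ] K →ₗ[ℂ] E)
    (htmul_inner : ∀ a b c d, ⟪tmul a b, tmul c d⟫_ℂ = ⟪a, c⟫_ℂ * ⟪b, d⟫_ℂ)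
    (hdense : (Submodule.span ℂ {v : E | ∃ a b, v = tmul a b}).topologicalClosure = ⊤)
    (A : (K →L[ℂ] K) → (E →L[ℂ] E))
    (hA : ∀ z a b, A z (tmul a b) = tmul a (z b))
    (U : E →L[ℂ] E) (hU : U * star U = 1 ∧ star U * U = 1)
    -- the set of slices `(f ⊗ ι)(U)` of `U` by normal functionals on `B(H)`
    (slices : Set (K →L[ℂ] K))
    (hslices : slices = {s | ∃ (n : ℕ) (ζ ζ' : Fin n → H),
      ∀ ξ η : K, ⟪η, s ξ⟫_ℂ = ∑ i, ⟪tmul (ζ' i) η, U (tmul (ζ i) ξ)⟫_ℂ}) :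
    Function.Injective (fun z : K →L[ℂ] K => U * A z * star U) ∧
    U * A 1 * star U = 1 ∧
    (∀ z w, U * A (z * w) * star U = (U * A z * star U) * (U * A w * star U)) ∧
    (∀ z, U * A (star z) * star U = star (U * A z * star U)) ∧
    (∀ (c : ℂ) z w, U * A (c • z + w) * star U = c • (U * A z * star U) + U * A w * star U) ∧
    (∀ z : K →L[ℂ] K, U * A z * star U = A z ↔ ∀ s ∈ slices, z * s = s * z) := by

  obtain ⟨hU1, hU2⟩ := hU
  -- L1: two vectors agreeing in inner product against all elementary tensors are equal
  have L1 : ∀ v w : E, (∀ c d, ⟪v, tmul c d⟫_ℂ = ⟪w, tmul c d⟫_ℂ) → v = w := by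
    intro v w h
    have h0 : ∀ c d, ⟪v - w, tmul c d⟫_ℂ = 0 := by
      intro c d; rw [inner_sub_left, h, sub_self]
    have hspan : (Submodule.span ℂ {v : E | ∃ a b, v = tmul a b} : Set E)
        ⊆ {y | ⟪v - w, y⟫_ℂ = 0} := by
      intro y hy
      induction hy using Submodule.span_induction with
      | mem x hx => obtain ⟨a, b, rfl⟩ := hx; exact h0 a b
      | zero => simp
      | add x y _ _ hx hy =>
          simp only [Set.mem_setOf_eq] at *
          rw [inner_add_right, hx, hy, add_zero]
      | smul c x _ hx =>
          simp only [Set.mem_setOf_eq] at *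
          rw [inner_smul_right, hx, mul_zero]
    have hcl : closure (Submodule.span ℂ {v : E | ∃ a b, v = tmul a b} : Set E)
        ⊆ {y | ⟪v - w, y⟫_ℂ = 0} :=
      closure_minimal hspan (isClosed_eq ((innerSL ℂ (v - w)).continuous) continuous_const)
    have hy : v - w ∈ closure (Submodule.span ℂ {v : E | ∃ a b, v = tmul a b} : Set E) := by
      rw [← Submodule.topologicalClosure_coe, hdense]; exact Submodule.mem_top
    have := hcl hy
    rw [Set.mem_setOf_eq, inner_self_eq_zero, sub_eq_zero] at this
    exact this
  -- L2: two operators agreeing on elementary tensors are equal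
  have L2 : ∀ f g : E →L[ℂ] E, (∀ a b, f (tmul a b) = g (tmul a b)) → f = g := by
    intro f g h
    ext y
    have hspan : (Submodule.span ℂ {v : E | ∃ a b, v = tmul a b} : Set E)
        ⊆ {y | f y = g y} := by
      intro y hy
      induction hy using Submodule.span_induction with
      | mem x hx => obtain ⟨a, b, rfl⟩ := hx; exact h a b
      | zero => simp
      | add x y _ _ hx hy =>
          simp only [Set.mem_setOf_eq] at *
          rw [map_add, map_add, hx, hy]
      | smul c x _ hx =>
          simp only [Set.mem_setOf_eq] at *
          rw [map_smul, map_smul, hx]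
    have hcl : closure (Submodule.span ℂ {v : E | ∃ a b, v = tmul a b} : Set E)
        ⊆ {y | f y = g y} :=
      closure_minimal hspan (isClosed_eq f.continuous g.continuous)
    exact hcl (by rw [← Submodule.topologicalClosure_coe, hdense]; exact Submodule.mem_top)
  -- norm of elementary tensor
  have hnorm : ∀ (a : H) (b : K), ‖tmul a b‖ = ‖a‖ * ‖b‖ := by
    intro a b
    have h1 := inner_self_eq_norm_sq_to_K (𝕜 := ℂ) (tmul a b)
    rw [htmul_inner, inner_self_eq_norm_sq_to_K (𝕜 := ℂ),
      inner_self_eq_norm_sq_to_K (𝕜 := ℂ)] at h1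
    have h2 : (‖tmul a b‖ : ℝ) ^ 2 = (‖a‖ * ‖b‖ : ℝ) ^ 2 := by
      have := h1.symm
      rw [mul_pow]
      exact_mod_cast this
    rw [← Real.sqrt_sq (norm_nonneg (tmul a b)), h2,
      Real.sqrt_sq (by positivity)]
  -- continuous version of `tmul a`
  set L : H → (K →L[ℂ] E) :=
    fun a => LinearMap.mkContinuous (tmul a) ‖a‖ (fun b => le_of_eq (hnorm a b)) with hL
  have hLapp : ∀ a b, L a b = tmul a b := fun a b => rfl
  -- A (star z) is the adjoint of A z
  have hadj : ∀ z : K →L[ℂ] K, A (star z) = ContinuousLinearMap.adjoint (A z) := by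
    intro z
    apply L2
    intro a b
    rw [hA]
    apply L1
    intro c d
    rw [ContinuousLinearMap.adjoint_inner_left, hA, htmul_inner, htmul_inner,
      ContinuousLinearMap.star_eq_adjoint, ContinuousLinearMap.adjoint_inner_left]
  -- cancellation
  have hcanc : ∀ X : E →L[ℂ] E, star U * (U * X * star U) * U = X := by
    intro X
    simp only [mul_assoc]
    rw [← mul_assoc (star U) U, hU2, one_mul, mul_one]
  refine ⟨?_, ?_, ?_, ?_, ?_, ?_⟩
  · -- injectivity
    intro z w h
    simp only at h
    have hAzw : A z = A w := by
      have := congrArg (fun X => star U * X * U) h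
      simpa only [hcanc] using this
    obtain ⟨a, ha⟩ := exists_ne (0 : H)
    ext b
    have h1 : tmul a (z b) = tmul a (w b) := by
      rw [← hA z a b, ← hA w a b, hAzw]
    have h2 : tmul a (z b - w b) = 0 := by
      rw [map_sub, h1, sub_self]
    have h3 : ⟪tmul a (z b - w b), tmul a (z b - w b)⟫_ℂ = 0 := by rw [h2]; simp
    rw [htmul_inner, mul_eq_zero, inner_self_eq_zero, inner_self_eq_zero] at h3
    rcases h3 with h3 | h3
    · exact absurd h3 ha
    · have := sub_eq_zero.mp h3
      simpa using this
  · -- unital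
    have hA1 : A 1 = 1 := L2 _ _ (fun a b => by rw [hA]; simp)
    rw [hA1, mul_one, hU1]
  · -- multiplicative
    intro z w
    have hmul : A (z * w) = A z * A w := by
      apply L2
      intro a b
      simp [hA, ContinuousLinearMap.mul_apply]
    rw [hmul]
    simp only [mul_assoc]
    rw [← mul_assoc (star U) U, hU2, one_mul]
  · -- star-preserving
    intro z
    rw [star_mul, star_mul, star_star, ContinuousLinearMap.star_eq_adjoint (A z), ← hadj,
      mul_assoc]
  · -- linear
    intro c z w
    have hlin : A (c • z + w) = c • A z + A w := by
      apply L2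
      intro a b
      simp [hA]
    rw [hlin, mul_add, add_mul, mul_smul_comm, smul_mul_assoc]
  · -- fixed points
    intro z
    constructor
    · -- forward
      intro h s hs
      rw [hslices] at hs
      obtain ⟨n, ζ, ζ', hform⟩ := hs
      have hcomm : ∀ x : E, A z (U x) = U (A z x) := by
        intro x
        have h' : U * A z * star U * U = A z * U := by rw [h]
        rw [mul_assoc (U * A z), hU2, mul_one] at h'
        calc A z (U x) = (A z * U) x := rfl
          _ = (U * A z) x := by rw [← h']
          _ = U (A z x) := rfl
      ext ξ
      apply ext_inner_left ℂ
      intro η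
      have key : ∀ i : Fin n, ⟪tmul (ζ' i) (star z η), U (tmul (ζ i) ξ)⟫_ℂ
          = ⟪tmul (ζ' i) η, U (tmul (ζ i) (z ξ))⟫_ℂ := by
        intro i
        rw [← hA (star z), hadj, ContinuousLinearMap.adjoint_inner_left, hcomm, hA]
      calc ⟪η, (z * s) ξ⟫_ℂ = ⟪η, z (s ξ)⟫_ℂ := rfl
        _ = ⟪star z η, s ξ⟫_ℂ := by
            rw [ContinuousLinearMap.star_eq_adjoint, ContinuousLinearMap.adjoint_inner_left]
        _ = ∑ i, ⟪tmul (ζ' i) (star z η), U (tmul (ζ i) ξ)⟫_ℂ := hform ξ (star z η)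
        _ = ∑ i, ⟪tmul (ζ' i) η, U (tmul (ζ i) (z ξ))⟫_ℂ := by
            exact Finset.sum_congr rfl (fun i _ => key i)
        _ = ⟪η, s (z ξ)⟫_ℂ := (hform (z ξ) η).symm
        _ = ⟪η, (s * z) ξ⟫_ℂ := rfl
    · -- backward
      intro h
      have hc : U * A z = A z * U := by
        apply L2
        intro a b
        show U (A z (tmul a b)) = A z (U (tmul a b))
        rw [hA]
        -- build the slice operator for vectors a, c
        apply L1
        intro c d
        set s : K →L[ℂ] K :=
          (ContinuousLinearMap.adjoint (L c)).comp (U.comp (L a)) with hs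
        have hsapp : ∀ ξ η : K, ⟪η, s ξ⟫_ℂ = ⟪tmul c η, U (tmul a ξ)⟫_ℂ := by
          intro ξ η
          rw [hs]
          simp only [ContinuousLinearMap.comp_apply]
          rw [ContinuousLinearMap.adjoint_inner_right]
          rfl
        have hsmem : s ∈ slices := by
          rw [hslices]
          refine ⟨1, ![a], ![c], fun ξ η => ?_⟩
          rw [Fin.sum_univ_one, hsapp]
          simp
        have hcs := h s hsmem
        have hswap : ∀ ξ, z (s ξ) = s (z ξ) := by
          intro ξ
          calc z (s ξ) = (z * s) ξ := rfl
            _ = (s * z) ξ := by rw [hcs]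
            _ = s (z ξ) := rfl
        -- now compute
        have main : ⟪tmul c d, U (tmul a (z b))⟫_ℂ = ⟪tmul c d, A z (U (tmul a b))⟫_ℂ := by
          calc ⟪tmul c d, U (tmul a (z b))⟫_ℂ = ⟪d, s (z b)⟫_ℂ := (hsapp (z b) d).symm
            _ = ⟪d, z (s b)⟫_ℂ := by rw [hswap]
            _ = ⟪star z d, s b⟫_ℂ := by
                rw [ContinuousLinearMap.star_eq_adjoint,
                  ContinuousLinearMap.adjoint_inner_left]
            _ = ⟪tmul c (star z d), U (tmul a b)⟫_ℂ := hsapp b (star z d)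
            _ = ⟪A (star z) (tmul c d), U (tmul a b)⟫_ℂ := by rw [hA]
            _ = ⟪tmul c d, A z (U (tmul a b))⟫_ℂ := by
                rw [hadj, ContinuousLinearMap.adjoint_inner_left]
        rw [← inner_conj_symm (U (tmul a (z b))) (tmul c d),
          ← inner_conj_symm (A z (U (tmul a b))) (tmul c d), main]
      calc U * A z * star U = A z * U * star U := by rw [hc]
        _ = A z * (U * star U) := by rw [mul_assoc]
        _ = A z := by rw [hU1, mul_one]
end

section
/- Let θ be irrational and F ⊆ ℤ a finite set with 0 ∉ F. Then there exist a measurable set I ⊆ ℝ/ℤ of positive Lebesgue measure m(I) > 0 such that, setting f = (1/m(I))·χ_I ∈ L¹(ℝ/ℤ) and h = χ_I ∈ L^∞(ℝ/ℤ), one has ∫ f(s) h(s + nθ) ds = 1 for n = 0 and = 0 for all n ∈ F. -/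
/-! Irrationality makes `n • θ` nonzero on the circle for every `n ≠ 0`, so a small enough ball `I`
around `0` is disjoint from its translates by the finitely many `n • θ`, `n ∈ F`. For those `n` the
integrand `χ_I(s) χ_I(s + nθ)` vanishes identically, while for `n = 0` the integral is
`m(I)⁻¹ m(I) = 1`. -/

open MeasureTheory

open Filter in
lemma Finset.exists_pos_forall_two_mul_lt_norm {ι E : Type*} [NormedAddGroup E]
    (F : Finset ι) (g : ι → E) (hg : ∀ i ∈ F, g i ≠ 0) :
    ∃ ε > 0, ∀ i ∈ F, 2 * ε < ‖g i‖ := by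
  have h_small : ∀ i ∈ F, ∀ᶠ ε in nhdsWithin (0 : ℝ) (Set.Ioi 0), 2 * ε < ‖g i‖ := fun i hi =>
    nhdsWithin_le_nhds <| ((continuous_const_mul 2).tendsto' 0 0 (mul_zero 2)).eventually
      (gt_mem_nhds (norm_pos_iff.2 (hg i hi)))
  obtain ⟨ε, hε_small, hε_pos⟩ :=
    ((eventually_all_finset F).2 h_small).and self_mem_nhdsWithin |>.exists
  exact ⟨ε, hε_pos, hε_small⟩

lemma AddCircle.zsmul_coe_ne_zero_of_irrational {θ : ℝ} (hθ : Irrational θ) {n : ℤ}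
    (hn : n ≠ 0) : n • (θ : AddCircle (1 : ℝ)) ≠ 0 := by
  have h_inf : ¬IsOfFinAddOrder (θ : AddCircle (1 : ℝ)) :=
    AddCircle.not_isOfFinAddOrder_iff_forall_rat_ne_div.2 fun q hq => hθ ⟨q, by simpa using hq⟩
  exact fun h => h_inf (isOfFinAddOrder_iff_zsmul_eq_zero.2 ⟨n, hn, h⟩)

open Metric in
lemma add_notMem_ball_zero_of_two_mul_lt_norm {E : Type*} [SeminormedAddCommGroup E] {ε : ℝ}
    {v s : E} (hv : 2 * ε < ‖v‖) (hs : s ∈ ball 0 ε) : s + v ∉ ball 0 ε := by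
  intro hsv
  rw [mem_ball_zero_iff] at hs hsv
  have : ‖v‖ ≤ ‖s + v‖ + ‖s‖ := by simpa using norm_sub_le (s + v) s
  linarith

section Indicator

variable {α : Type*} [MeasurableSpace α] {μ : Measure α} {I : Set α}

lemma integral_inv_measure_mul_indicator_mul_indicator_self (hI : MeasurableSet I)
    (hμI : μ I ≠ 0) (hμI_top : μ I ≠ ⊤) :
    ∫ s, (μ I).toReal⁻¹ * I.indicator 1 s * I.indicator 1 s ∂μ = (1 : ℝ) := by
  simp_rw [mul_assoc, ← Set.inter_indicator_mul, Set.inter_self, Pi.one_apply, mul_one,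
    ← Pi.one_def]
  rw [integral_const_mul, integral_indicator_one hI, Measure.real]
  exact inv_mul_cancel₀ (ENNReal.toReal_ne_zero.2 ⟨hμI, hμI_top⟩)

lemma integral_mul_indicator_mul_indicator_add_eq_zero [Add α] {c : ℝ} {v : α}
    (h : ∀ s ∈ I, s + v ∉ I) :
    ∫ s, c * I.indicator 1 s * I.indicator 1 (s + v) ∂μ = (0 : ℝ) := by
  refine integral_eq_zero_of_ae (Filter.Eventually.of_forall fun s => ?_)
  by_cases hs : s ∈ I
  · simp [Set.indicator_of_notMem (h s hs)]
  · simp [Set.indicator_of_notMem hs]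

end Indicator

/-- For irrational `θ` and finite `F ⊆ ℤ` with `0 ∉ F`, there is a measurable set
`I ⊆ ℝ/ℤ` of positive measure such that, with `f = m(I)⁻¹ χ_I` and `h = χ_I`,
`∫ f(s) h(s + nθ) ds = 1` for `n = 0` and `= 0` for all `n ∈ F`. -/
theorem exists_set_slice_values
    (θ : ℝ) (hθ : Irrational θ) (F : Finset ℤ) (hF : (0 : ℤ) ∉ F) :
    ∃ I : Set (AddCircle (1 : ℝ)), MeasurableSet I ∧ 0 < volume I ∧
      (∫ s : AddCircle (1 : ℝ),
          (volume I).toReal⁻¹ * I.indicator (fun _ => (1 : ℝ)) s *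
            I.indicator (fun _ => (1 : ℝ)) (s + (0 : ℤ) • ((θ : AddCircle (1 : ℝ))))) = 1 ∧
      ∀ n ∈ F,
        (∫ s : AddCircle (1 : ℝ),
          (volume I).toReal⁻¹ * I.indicator (fun _ => (1 : ℝ)) s *
            I.indicator (fun _ => (1 : ℝ)) (s + n • ((θ : AddCircle (1 : ℝ))))) = 0 := by
  obtain ⟨ε, hε, h_far⟩ := F.exists_pos_forall_two_mul_lt_norm (· • (θ : AddCircle (1 : ℝ)))
    fun n hn => AddCircle.zsmul_coe_ne_zero_of_irrational hθ (ne_of_mem_of_not_mem hn hF)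
  have h_pos : 0 < volume (Metric.ball (0 : AddCircle (1 : ℝ)) ε) := Metric.measure_ball_pos _ _ hε
  refine ⟨Metric.ball 0 ε, measurableSet_ball, h_pos, ?_, fun n hn => ?_⟩
  · simp_rw [zero_smul, add_zero]
    exact integral_inv_measure_mul_indicator_mul_indicator_self measurableSet_ball h_pos.ne'
      (measure_ne_top _ _)
  · exact integral_mul_indicator_mul_indicator_add_eq_zero fun s hs =>
      add_notMem_ball_zero_of_two_mul_lt_norm (h_far n hn) hs
end
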